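/- arXiv:1801.08295 — 10 statements merged into one kernel-verified Lean document; each statement's English description precedes it below -/
import Mathlib

section
/- Suppose T is not manipulated in any of the n experiments (i.e., T ∉ Υ_i for every i ∈ {1,…,n}) and the family (Υ_1,…,Υ_n) is not conservative. Then pa(T) ⊆ ⋃_{i=1}^n MB_i(T) ⊆ MB(T). (Paper's Theorem for ζ_T = 0 with non-conservative Υ.) -/
/-- Parents of `T`: direct causes. -/
def parents {V : Type*} (E : V → V → Prop) (T : V) : Set V := {X | E X T}

/-- Children of `T`: direct effects. -/
def children {V : Type*} (E : V → V → Prop) (T : V) : Set V := {Y | E T Y}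

/-- Spouses of `T`: other direct causes of children of `T`. -/
def spouses {V : Type*} (E : V → V → Prop) (T : V) : Set V :=
  {X | X ≠ T ∧ ∃ Y, E T Y ∧ E X Y}

/-- Markov blanket of `T`. -/
def markovBlanket {V : Type*} (E : V → V → Prop) (T : V) : Set V :=
  parents E T ∪ children E T ∪ spouses E T

/-- Post-intervention edge relation: edges into manipulated variables are deleted. -/
def postE {V : Type*} (E : V → V → Prop) (Υ : Set V) : V → V → Prop :=
  fun X Y => E X Y ∧ Y ∉ Υ

/-- A DAG: the transitive closure of the edge relation is irreflexive. -/
def Acyclic {V : Type*} (E : V → V → Prop) : Prop :=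
  Irreflexive (Relation.TransGen E)

/-- A family of intervention sets is conservative if every manipulated variable
is unmanipulated in at least one experiment. -/
def Conservative {V ι : Type*} (Υ : ι → Set V) : Prop :=
  ∀ X ∈ ⋃ i, Υ i, ∃ k, X ∉ Υ k

/-- `ζ_T`: the number of experiments in which `T` is manipulated. -/
noncomputable def zeta {V : Type*} {n : ℕ} (Υ : Fin n → Set V) (T : V) : ℕ :=
  Nat.card {i : Fin n // T ∈ Υ i}

/-- ζ_T = 0 and Υ not conservative ⟹ pa(T) ⊆ ⋃ MB_i(T) ⊆ MB(T). -/
theorem pa_subset_union_mb_subset_mb_of_not_manipulated_not_conservative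
    {V : Type*} [Fintype V] (E : V → V → Prop) (hacyc : Acyclic E) (T : V)
    {n : ℕ} (Υ : Fin n → Set V)
    (hT : ∀ i, T ∉ Υ i) (hcons : ¬ Conservative Υ) :
    parents E T ⊆ (⋃ i, markovBlanket (postE E (Υ i)) T) ∧
      (⋃ i, markovBlanket (postE E (Υ i)) T) ⊆ markovBlanket E T := by
  have hn : n ≠ 0 := by
    rintro rfl
    exact hcons (fun X hX => absurd hX (by simp))
  obtain ⟨i⟩ : Nonempty (Fin n) := ⟨⟨0, Nat.pos_of_ne_zero hn⟩⟩
  constructor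
  · intro X hX
    exact Set.mem_iUnion.2 ⟨i, Or.inl (Or.inl ⟨hX, hT i⟩)⟩
  · intro X hX
    obtain ⟨j, hj⟩ := Set.mem_iUnion.1 hX
    rcases hj with (h | h) | h
    · exact Or.inl (Or.inl h.1)
    · exact Or.inl (Or.inr h.1)
    · exact Or.inr ⟨h.1, h.2.choose, h.2.choose_spec.1.1, h.2.choose_spec.2.1⟩
end

section
/- Suppose n ≥ 1, T is not manipulated in any of the n experiments (T ∉ Υ_i for every i), and every child of T is manipulated in at least one experiment (ch(T) ⊆ ⋃_{i=1}^n Υ_i). Then pa(T) ⊆ ⋂_{i=1}^n MB_i(T) ⊆ pa(T) ∪ sp(T); in particular the intersection contains all parents of T and contains no child of T that is not also a spouse of T. (Corrected weak form of the paper's Theorem on recovering pa(T) from the intersection when ζ_T = 0 and ch(T) ⊆ ⋃Υ_i.) -/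
/-- n ≥ 1, T never manipulated, every child of T manipulated in at least
one experiment ⟹ pa(T) ⊆ ⋂ MB_i(T) ⊆ pa(T) ∪ sp(T). -/
theorem pa_subset_inter_mb_subset_pa_union_sp
    {V : Type*} [Fintype V] (E : V → V → Prop) (hacyc : Acyclic E) (T : V)
    {n : ℕ} (hn : 1 ≤ n) (Υ : Fin n → Set V)
    (hT : ∀ i, T ∉ Υ i) (hch : children E T ⊆ ⋃ i, Υ i) :
    parents E T ⊆ (⋂ i, markovBlanket (postE E (Υ i)) T) ∧
      (⋂ i, markovBlanket (postE E (Υ i)) T) ⊆ parents E T ∪ spouses E T := by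
  constructor
  · intro X hX
    exact Set.mem_iInter.2 fun i => Or.inl (Or.inl ⟨hX, hT i⟩)
  · intro X hX
    have hmem : ∀ i, X ∈ markovBlanket (postE E (Υ i)) T := Set.mem_iInter.1 hX
    have key : ∀ j, X ∈ parents E T ∪ spouses E T ∨ (E T X ∧ X ∉ Υ j) := by
      intro j
      rcases hmem j with (hp | hc) | hs
      · exact Or.inl (Or.inl hp.1)
      · exact Or.inr hc
      · obtain ⟨hne, Y, hTY, hXY⟩ := hs
        exact Or.inl (Or.inr ⟨hne, Y, hTY.1, hXY.1⟩)
    rcases key ⟨0, hn⟩ with h | ⟨hTX, _⟩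
    · exact h
    · rcases Set.mem_iUnion.1 (hch hTX) with ⟨j, hj⟩
      rcases key j with h | ⟨_, hnj⟩
      · exact h
      · exact absurd hj hnj
end

section
/- Suppose 0 < ζ_T < n (T is manipulated in at least one but not all of the n experiments) and the family (Υ_1,…,Υ_n) is conservative. Then ⋃_{i=1}^n MB_i(T) = MB(T). (Paper's Theorem for 0 < ζ_T < n with conservative Υ.) -/
/-- 0 < ζ_T < n and Υ conservative ⟹ ⋃ MB_i(T) = MB(T). -/
theorem union_mb_eq_mb_of_sometimes_manipulated_conservative
    {V : Type*} [Fintype V] (E : V → V → Prop) (hacyc : Acyclic E) (T : V)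
    {n : ℕ} (Υ : Fin n → Set V)
    (hζpos : 0 < zeta Υ T) (hζlt : zeta Υ T < n) (hcons : Conservative Υ) :
    (⋃ i, markovBlanket (postE E (Υ i)) T) = markovBlanket E T := by
  have hn : 0 < n := lt_of_le_of_lt (Nat.zero_le _) hζlt
  -- there is an index where T is not manipulated
  have hTfree : ∃ i, T ∉ Υ i := by
    by_contra h
    push_neg at h
    have : zeta Υ T = n := by
      unfold zeta
      have : {i : Fin n // T ∈ Υ i} ≃ Fin n :=
        ⟨fun x => x.1, fun i => ⟨i, h i⟩, fun x => rfl, fun i => rfl⟩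
      simp [Nat.card_congr this]
    omega
  apply Set.eq_of_subset_of_subset
  · intro X hX
    rcases Set.mem_iUnion.mp hX with ⟨i, hi⟩
    rcases hi with (hp | hc) | hs
    · exact Or.inl (Or.inl hp.1)
    · exact Or.inl (Or.inr hc.1)
    · exact Or.inr ⟨hs.1, hs.2.choose, hs.2.choose_spec.1.1, hs.2.choose_spec.2.1⟩
  · intro X hX
    rcases hX with (hp | hc) | hs
    · rcases hTfree with ⟨i, hi⟩
      exact Set.mem_iUnion.mpr ⟨i, Or.inl (Or.inl ⟨hp, hi⟩)⟩
    · have : ∃ i, X ∉ Υ i := by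
        by_cases hmem : X ∈ ⋃ i, Υ i
        · exact hcons X hmem
        · exact ⟨⟨0, hn⟩, fun hx => hmem (Set.mem_iUnion.mpr ⟨_, hx⟩)⟩
      rcases this with ⟨i, hi⟩
      exact Set.mem_iUnion.mpr ⟨i, Or.inl (Or.inr ⟨hc, hi⟩)⟩
    · rcases hs with ⟨hne, Y, hTY, hXY⟩
      have : ∃ i, Y ∉ Υ i := by
        by_cases hmem : Y ∈ ⋃ i, Υ i
        · exact hcons Y hmem
        · exact ⟨⟨0, hn⟩, fun hx => hmem (Set.mem_iUnion.mpr ⟨_, hx⟩)⟩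
      rcases this with ⟨i, hi⟩
      exact Set.mem_iUnion.mpr ⟨i, Or.inr ⟨hne, Y, ⟨hTY, hi⟩, hXY, hi⟩⟩
end

section
/- Suppose 0 < ζ_T < n (T is manipulated in at least one but not all of the n experiments) and the family (Υ_1∖{T},…,Υ_n∖{T}) is not conservative. Then pa(T) ⊆ ⋃_{i=1}^n MB_i(T) ⊆ MB(T). (Paper's Theorem for 0 < ζ_T < n with non-conservative Υ∖{T}.) -/
/-- 0 < ζ_T < n and (Υ_i ∖ {T})_i not conservative ⟹
pa(T) ⊆ ⋃ MB_i(T) ⊆ MB(T). -/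
theorem pa_subset_union_mb_subset_mb_of_sometimes_manipulated_not_conservative
    {V : Type*} [Fintype V] (E : V → V → Prop) (hacyc : Acyclic E) (T : V)
    {n : ℕ} (Υ : Fin n → Set V)
    (hζpos : 0 < zeta Υ T) (hζlt : zeta Υ T < n)
    (hcons : ¬ Conservative (fun i => Υ i \ {T})) :
    parents E T ⊆ (⋃ i, markovBlanket (postE E (Υ i)) T) ∧
      (⋃ i, markovBlanket (postE E (Υ i)) T) ⊆ markovBlanket E T := by
  have hex : ∃ i, T ∉ Υ i := by
    by_contra h
    push_neg at h
    have : zeta Υ T = n := by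
      simp only [zeta]
      rw [Nat.card_congr (Equiv.subtypeUnivEquiv h)]
      simp
    omega
  constructor
  · obtain ⟨i, hi⟩ := hex
    intro X hX
    refine Set.mem_iUnion.mpr ⟨i, Or.inl (Or.inl ?_)⟩
    exact ⟨hX, hi⟩
  · intro X hX
    obtain ⟨i, hi⟩ := Set.mem_iUnion.mp hX
    rcases hi with (h | h) | h
    · exact Or.inl (Or.inl h.1)
    · exact Or.inl (Or.inr h.1)
    · obtain ⟨hne, Y, hTY, hXY⟩ := h
      exact Or.inr ⟨hne, Y, hTY.1, hXY.1⟩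
end

section
/- Suppose 0 < ζ_T < n (T is manipulated in at least one but not all of the n experiments) and every child of T is manipulated in every experiment (ch(T) ⊆ Υ_i for every i). Then ⋂_{i=1}^n MB_i(T) = ∅. (Precise form of part (1) of the paper's Theorem on the intersection when 0 < ζ_T < n and the children of T are manipulated.) -/
/-- 0 < ζ_T < n and every child of T manipulated in every experiment ⟹
⋂ MB_i(T) = ∅. -/
theorem inter_mb_eq_empty_of_sometimes_manipulated_children_always_manipulated
    {V : Type*} [Fintype V] (E : V → V → Prop) (hacyc : Acyclic E) (T : V)
    {n : ℕ} (Υ : Fin n → Set V)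
    (hζpos : 0 < zeta Υ T) (hζlt : zeta Υ T < n)
    (hch : ∀ i, children E T ⊆ Υ i) :
    (⋂ i, markovBlanket (postE E (Υ i)) T) = ∅ := by
  have : Nonempty {i : Fin n // T ∈ Υ i} := Nat.card_pos_iff.mp hζpos |>.1
  obtain ⟨i, hi⟩ := this
  apply Set.eq_empty_iff_forall_notMem.mpr
  intro X hX
  have hXi := Set.mem_iInter.mp hX i
  rcases hXi with (hp | hc) | hs
  · exact hp.2 hi
  · exact hc.2 (hch i hc.1)
  · obtain ⟨_, Y, hTY, _⟩ := hs
    exact hTY.2 (hch i hTY.1)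
end

section
/- Suppose 0 < ζ_T < n (T is manipulated in at least one but not all of the n experiments) and no child of T is manipulated in any experiment (ch(T) ∩ Υ_i = ∅ for every i). Then ⋂_{i=1}^n MB_i(T) = ch(T) ∪ sp(T). (Part (2) of the paper's Theorem on the intersection when 0 < ζ_T < n.) -/
/-- 0 < ζ_T < n and no child of T manipulated in any experiment ⟹
⋂ MB_i(T) = ch(T) ∪ sp(T). -/
theorem inter_mb_eq_ch_union_sp_of_sometimes_manipulated_children_never_manipulated
    {V : Type*} [Fintype V] (E : V → V → Prop) (hacyc : Acyclic E) (T : V)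
    {n : ℕ} (Υ : Fin n → Set V)
    (hζpos : 0 < zeta Υ T) (hζlt : zeta Υ T < n)
    (hch : ∀ i, children E T ∩ Υ i = ∅) :
    (⋂ i, markovBlanket (postE E (Υ i)) T) = children E T ∪ spouses E T := by
  have hch' : ∀ i Y, E T Y → Y ∉ Υ i := by
    intro i Y hTY hY
    have := hch i
    have : Y ∈ children E T ∩ Υ i := Set.mem_inter hTY hY
    rw [hch i] at this
    exact this
  obtain ⟨i0, hi0⟩ : ∃ i, T ∈ Υ i := by
    by_contra h
    push_neg at h
    have : zeta Υ T = 0 := by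
      have : IsEmpty {i : Fin n // T ∈ Υ i} := ⟨fun ⟨i, hi⟩ => h i hi⟩
      simp [zeta, Nat.card_of_isEmpty]
    omega
  ext X
  simp only [Set.mem_iInter, markovBlanket, parents, children, spouses, postE,
    Set.mem_union, Set.mem_setOf_eq]
  constructor
  · intro h
    rcases h i0 with (⟨hXT, hT⟩ | ⟨hTX, hX⟩) | ⟨hne, Y, ⟨hTY, hY⟩, hXY, _⟩
    · exact absurd hi0 hT
    · exact Or.inl hTX
    · exact Or.inr ⟨hne, Y, hTY, hXY⟩
  · rintro (hTX | ⟨hne, Y, hTY, hXY⟩) i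
    · exact Or.inl (Or.inr ⟨hTX, hch' i X hTX⟩)
    · exact Or.inr ⟨hne, Y, ⟨hTY, hch' i Y hTY⟩, hXY, hch' i Y hTY⟩
end

section
/- Suppose ζ_T = n (T is manipulated in every experiment, i.e., T ∈ Υ_i for all i ∈ {1,…,n}, n ≥ 1) and the family (Υ_1∖{T},…,Υ_n∖{T}) is conservative. Then ⋃_{i=1}^n MB_i(T) = ch(T) ∪ sp(T). (Paper's Theorem for ζ_T = n with conservative Υ∖{T}.) -/
/-- ζ_T = n (T manipulated in every experiment, n ≥ 1) and
(Υ_i ∖ {T})_i conservative ⟹ ⋃ MB_i(T) = ch(T) ∪ sp(T). -/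
theorem union_mb_eq_ch_union_sp_of_always_manipulated_conservative
    {V : Type*} [Fintype V] (E : V → V → Prop) (hacyc : Acyclic E) (T : V)
    {n : ℕ} (hn : 1 ≤ n) (Υ : Fin n → Set V)
    (hT : ∀ i, T ∈ Υ i) (hcons : Conservative (fun i => Υ i \ {T})) :
    (⋃ i, markovBlanket (postE E (Υ i)) T) = children E T ∪ spouses E T := by
  apply Set.eq_of_subset_of_subset
  · intro x hx
    simp only [Set.mem_iUnion, markovBlanket, parents, children, spouses, postE,
      Set.mem_union, Set.mem_setOf_eq] at hx ⊢
    obtain ⟨i, hx⟩ := hx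
    rcases hx with (hp | hc) | hs
    · exact absurd (hT i) hp.2
    · exact Or.inl hc.1
    · obtain ⟨hxT, Y, hTY, hXY⟩ := hs
      exact Or.inr ⟨hxT, Y, hTY.1, hXY.1⟩
  · have key : ∀ Y : V, Y ≠ T → ∃ i, Y ∉ Υ i := by
      intro Y hYT
      by_cases h : Y ∈ ⋃ i, (Υ i \ {T})
      · obtain ⟨k, hk⟩ := hcons Y h
        exact ⟨k, fun hmem => hk ⟨hmem, hYT⟩⟩
      · refine ⟨⟨0, hn⟩, fun hmem => h ?_⟩
        exact Set.mem_iUnion.mpr ⟨⟨0, hn⟩, ⟨hmem, hYT⟩⟩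
    intro x hx
    simp only [Set.mem_iUnion, markovBlanket, parents, children, spouses, postE,
      Set.mem_union, Set.mem_setOf_eq] at hx ⊢
    rcases hx with hc | hs
    · have hxT : x ≠ T := fun h => hacyc T (Relation.TransGen.single (h ▸ hc))
      obtain ⟨i, hi⟩ := key x hxT
      exact ⟨i, Or.inl (Or.inr ⟨hc, hi⟩)⟩
    · obtain ⟨hxT, Y, hTY, hXY⟩ := hs
      have hYT : Y ≠ T := fun h => hacyc T (Relation.TransGen.single (h ▸ hTY))
      obtain ⟨i, hi⟩ := key Y hYT
      exact ⟨i, Or.inr ⟨hxT, Y, ⟨hTY, hi⟩, ⟨hXY, hi⟩⟩⟩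
end

section
/- Suppose ζ_T = n (T is manipulated in every experiment, i.e., T ∈ Υ_i for all i ∈ {1,…,n}) and the family (Υ_1∖{T},…,Υ_n∖{T}) is not conservative. Then ⋃_{i=1}^n MB_i(T) ⊆ ch(T) ∪ sp(T). (Paper's Theorem for ζ_T = n with non-conservative Υ∖{T}.) -/
/-- ζ_T = n (T manipulated in every experiment) and
(Υ_i ∖ {T})_i not conservative ⟹ ⋃ MB_i(T) ⊆ ch(T) ∪ sp(T). -/
theorem union_mb_subset_ch_union_sp_of_always_manipulated_not_conservative
    {V : Type*} [Fintype V] (E : V → V → Prop) (hacyc : Acyclic E) (T : V)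
    {n : ℕ} (Υ : Fin n → Set V)
    (hT : ∀ i, T ∈ Υ i) (hcons : ¬ Conservative (fun i => Υ i \ {T})) :
    (⋃ i, markovBlanket (postE E (Υ i)) T) ⊆ children E T ∪ spouses E T := by
  intro x hx
  simp only [Set.mem_iUnion] at hx
  obtain ⟨i, hx⟩ := hx
  rcases hx with (hp | hc) | hs
  · exact absurd (hT i) hp.2
  · exact Or.inl hc.1
  · obtain ⟨hne, Y, hTY, hXY⟩ := hs
    exact Or.inr ⟨hne, Y, hTY.1, hXY.1⟩
end

section
/- Suppose ζ_T = n (T ∈ Υ_i for every i, n ≥ 1) and no child of T is manipulated in any experiment (ch(T) ∩ Υ_i = ∅ for every i). Then MB_i(T) = ch(T) ∪ sp(T) for every i, and consequently ⋂_{i=1}^n MB_i(T) = ch(T) ∪ sp(T). (Part (2) of the paper's Theorem on the intersection when ζ_T = n.) -/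
/-- ζ_T = n (n ≥ 1) and no child of T manipulated in any experiment ⟹
MB_i(T) = ch(T) ∪ sp(T) for every i, so ⋂ MB_i(T) = ch(T) ∪ sp(T). -/
theorem mb_eq_ch_union_sp_of_always_manipulated_children_never_manipulated
    {V : Type*} [Fintype V] (E : V → V → Prop) (hacyc : Acyclic E) (T : V)
    {n : ℕ} (hn : 1 ≤ n) (Υ : Fin n → Set V)
    (hT : ∀ i, T ∈ Υ i) (hch : ∀ i, children E T ∩ Υ i = ∅) :
    (∀ i, markovBlanket (postE E (Υ i)) T = children E T ∪ spouses E T) ∧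
      (⋂ i, markovBlanket (postE E (Υ i)) T) = children E T ∪ spouses E T := by
  have key : ∀ i, markovBlanket (postE E (Υ i)) T = children E T ∪ spouses E T := by
    intro i
    have hnotin : ∀ Y, E T Y → Y ∉ Υ i := by
      intro Y hY hYi
      have : Y ∈ children E T ∩ Υ i := ⟨hY, hYi⟩
      simp [hch i] at this
    ext X
    simp only [markovBlanket, parents, children, spouses, postE, Set.mem_union,
      Set.mem_setOf_eq]
    constructor
    · rintro ((⟨_, hX⟩ | ⟨hX, _⟩) | ⟨hne, Y, ⟨h1, _⟩, h2, _⟩)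
      · exact absurd (hT i) hX
      · exact Or.inl hX
      · exact Or.inr ⟨hne, Y, h1, h2⟩
    · rintro (hX | ⟨hne, Y, h1, h2⟩)
      · exact Or.inl (Or.inr ⟨hX, hnotin X hX⟩)
      · exact Or.inr ⟨hne, Y, ⟨h1, hnotin Y h1⟩, h2, hnotin Y h1⟩
  refine ⟨key, ?_⟩
  have : Nonempty (Fin n) := ⟨⟨0, hn⟩⟩
  simp [key, Set.iInter_const]
end

section
/- Correctness of the baseline algorithm: suppose ζ_T < n (there is at least one experiment in which T is not manipulated) and the family (Υ_1,…,Υ_n) is conservative. Then the baseline output, the union of the Markov blankets discovered in the individual datasets, is the true Markov blanket: ⋃_{i=1}^n MB_i(T) = MB(T). (Paper's Theorem on the soundness of the baseline algorithm, combining the cases ζ_T = 0 and 0 < ζ_T < n.) -/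
/-- correctness of the baseline algorithm: ζ_T < n and Υ conservative ⟹
⋃ MB_i(T) = MB(T). -/
theorem baseline_union_mb_eq_mb
    {V : Type*} [Fintype V] (E : V → V → Prop) (hacyc : Acyclic E) (T : V)
    {n : ℕ} (Υ : Fin n → Set V)
    (hζ : zeta Υ T < n) (hcons : Conservative Υ) :
    (⋃ i, markovBlanket (postE E (Υ i)) T) = markovBlanket E T := by
  -- there exists i with T ∉ Υ i
  have hi0 : ∃ i, T ∉ Υ i := by
    by_contra h
    push_neg at h
    have : zeta Υ T = n := by
      unfold zeta
      have e : {i : Fin n // T ∈ Υ i} ≃ Fin n :=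
        ⟨fun x => x.1, fun i => ⟨i, h i⟩, fun x => rfl, fun i => rfl⟩
      simp [Nat.card_congr e]
    omega
  obtain ⟨i0, hi0⟩ := hi0
  -- for any Y, there is i with Y ∉ Υ i
  have key : ∀ Y : V, ∃ i, Y ∉ Υ i := by
    intro Y
    by_cases hY : Y ∈ ⋃ i, Υ i
    · exact hcons Y hY
    · exact ⟨i0, fun h => hY (Set.mem_iUnion.mpr ⟨i0, h⟩)⟩
  ext X
  simp only [Set.mem_iUnion, markovBlanket, parents, children, spouses, postE,
    Set.mem_union, Set.mem_setOf_eq]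
  constructor
  · rintro ⟨i, (⟨h, -⟩ | ⟨h, -⟩) | ⟨hne, Y, ⟨h1, -⟩, h2, -⟩⟩
    · exact Or.inl (Or.inl h)
    · exact Or.inl (Or.inr h)
    · exact Or.inr ⟨hne, Y, h1, h2⟩
  · rintro ((h | h) | ⟨hne, Y, h1, h2⟩)
    · exact ⟨i0, Or.inl (Or.inl ⟨h, hi0⟩)⟩
    · obtain ⟨i, hi⟩ := key X
      exact ⟨i, Or.inl (Or.inr ⟨h, hi⟩)⟩
    · obtain ⟨i, hi⟩ := key Y
      exact ⟨i, Or.inr ⟨hne, Y, ⟨h1, hi⟩, h2, hi⟩⟩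
end
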